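/- arXiv:0905.1587 — 7 statements merged into one kernel-verified Lean document; each statement's English description precedes it below -/
import Mathlib

section
/- If there exists a linear k-uniform hypergraph H with n vertices and m hyperedges such that m/n ≥ 2^k, then there exists an unsatisfiable linear k-CNF formula with m clauses. -/
abbrev Var := ℕ
abbrev Lit := Var × Bool
abbrev Clause := Finset Lit
abbrev CNF := Finset Clause

/-- A clause is valid if it does not contain a variable together with its negation. -/
def Clause.valid (C : Clause) : Prop := ∀ x : Var, ¬(((x, true) ∈ C) ∧ ((x, false) ∈ C))

/-- The set of variables of a clause. -/
def vbl (C : Clause) : Finset Var := C.image Prod.fst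

/-- A `k`-CNF formula: every clause is valid and has exactly `k` literals. -/
def IsKCNF (k : ℕ) (F : CNF) : Prop := ∀ C ∈ F, Clause.valid C ∧ C.card = k

/-- A CNF formula is linear if any two distinct clauses share at most one variable. -/
def LinearCNF (F : CNF) : Prop := ∀ C ∈ F, ∀ D ∈ F, C ≠ D → (vbl C ∩ vbl D).card ≤ 1

/-- A CNF formula is weakly linear if any two distinct clauses share at most one literal. -/
def WeaklyLinear (F : CNF) : Prop := ∀ C ∈ F, ∀ D ∈ F, C ≠ D → (C ∩ D).card ≤ 1

/-- An assignment satisfies a formula if every clause contains a true literal. -/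
def Satisfies (α : Var → Bool) (F : CNF) : Prop := ∀ C ∈ F, ∃ l ∈ C, α l.1 = l.2

def Unsat (F : CNF) : Prop := ¬ ∃ α, Satisfies α F
/-- A hypergraph (given by its edge set) is linear if any two distinct hyperedges
intersect in at most one vertex. -/
def HypLinear (E : Finset (Finset ℕ)) : Prop := ∀ e ∈ E, ∀ f ∈ E, e ≠ f → (e ∩ f).card ≤ 1

/-- A hypergraph is `k`-uniform if every hyperedge has exactly `k` vertices. -/
def KUniform (k : ℕ) (E : Finset (Finset ℕ)) : Prop := ∀ e ∈ E, e.card = k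

/-!
Sign every vertex of every hyperedge independently and uniformly at random; each hyperedge
becomes a clause on the same variables, so the formula is a linear `k`-CNF with `m` clauses.
A fixed assignment of the `n` vertices falsifies a given clause with probability `2⁻ᵏ`, hence
satisfies the formula with probability `(1 - 2⁻ᵏ)ᵐ ≤ e^(-m/2ᵏ) ≤ e⁻ⁿ`. By the union bound over
the `2ⁿ` assignments, the formula is satisfiable with probability at most `(2/e)ⁿ < 1`.
-/

open Finset

lemma two_pow_mul_one_sub_inv_pow_lt_one {t n m : ℕ} (ht : 1 ≤ t) (hn : n ≠ 0)
    (hm : t * n ≤ m) : (2 : ℝ) ^ n * (1 - 1 / t) ^ m < 1 := by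
  have htR : (1 : ℝ) ≤ t := by exact_mod_cast ht
  have hq₀ : 0 ≤ 1 - 1 / (t : ℝ) := sub_nonneg.2 (div_le_one_of_le₀ htR (by positivity))
  have hq₁ : 1 - 1 / (t : ℝ) ≤ 1 := sub_le_self _ (by positivity)
  calc (2 : ℝ) ^ n * (1 - 1 / t) ^ m ≤ 2 ^ n * ((1 - 1 / t) ^ t) ^ n := by
        rw [← pow_mul]
        exact mul_le_mul_of_nonneg_left (pow_le_pow_of_le_one hq₀ hq₁ hm) (by positivity)
    _ ≤ 2 ^ n * Real.exp (-1) ^ n := by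
        gcongr; exact Real.one_sub_div_pow_le_exp_neg htR
    _ = (2 * Real.exp (-1)) ^ n := (mul_pow _ _ _).symm
    _ < 1 := pow_lt_one₀ (by positivity) (by linarith [Real.exp_neg_one_lt_half]) hn

lemma two_pow_mul_pred_pow_lt_pow {t n m : ℕ} (ht : 1 ≤ t) (hn : n ≠ 0) (hm : t * n ≤ m) :
    2 ^ n * (t - 1) ^ m < t ^ m := by
  have htR : (0 : ℝ) < t := by exact_mod_cast ht
  rw [← Nat.cast_lt (α := ℝ)]
  push_cast [ht]
  calc (2 : ℝ) ^ n * (t - 1) ^ m = t ^ m * (2 ^ n * (1 - 1 / t) ^ m) := by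
        rw [mul_left_comm, ← mul_pow, mul_one_sub, mul_one_div_cancel htR.ne']
    _ < t ^ m * 1 :=
        mul_lt_mul_of_pos_left (two_pow_mul_one_sub_inv_pow_lt_one ht hn hm) (by positivity)
    _ = t ^ m := mul_one _

abbrev Signing (E : Finset (Finset ℕ)) : Type := ∀ e : E, e.1 → Bool

namespace Signing

variable {E : Finset (Finset ℕ)} (σ : Signing E)

def clause (e : E) : Clause := e.1.attach.image fun v => (v.1, σ e v)

def formula : CNF := univ.image σ.clause

lemma mem_clause {e : E} {x : Var} {b : Bool} :
    (x, b) ∈ σ.clause e ↔ ∃ h : x ∈ e.1, σ e ⟨x, h⟩ = b := by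
  simp [clause]

lemma vbl_clause (e : E) : vbl (σ.clause e) = e.1 := by
  rw [vbl, clause, image_image]
  exact attach_image_val

lemma clause_valid (e : E) : (σ.clause e).valid := by
  rintro x ⟨htrue, hfalse⟩
  obtain ⟨_, h₁⟩ := σ.mem_clause.1 htrue
  obtain ⟨_, h₂⟩ := σ.mem_clause.1 hfalse
  exact Bool.noConfusion (h₁.symm.trans h₂)

lemma card_clause (e : E) : (σ.clause e).card = e.1.card := by
  rw [clause, card_image_of_injective _ fun v w h => Subtype.ext (congrArg Prod.fst h),
    card_attach]

lemma clause_injective : Function.Injective σ.clause := fun e f h =>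
  Subtype.ext <| by simpa only [vbl_clause] using congrArg vbl h

lemma card_formula : σ.formula.card = E.card := by
  rw [formula, card_image_of_injective _ σ.clause_injective, card_univ, Fintype.card_coe]

lemma isKCNF_formula {k : ℕ} (hunif : KUniform k E) : IsKCNF k σ.formula := by
  simp only [IsKCNF, formula, mem_image, mem_univ, true_and, forall_exists_index,
    forall_apply_eq_imp_iff]
  exact fun e => ⟨σ.clause_valid e, (σ.card_clause e).trans (hunif e.1 e.2)⟩

lemma linearCNF_formula (hlin : HypLinear E) : LinearCNF σ.formula := by
  simp only [LinearCNF, formula, mem_image, mem_univ, true_and, forall_exists_index,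
    forall_apply_eq_imp_iff, vbl_clause]
  exact fun e f hne => hlin e.1 e.2 f.1 f.2 fun h => hne (congrArg σ.clause (Subtype.ext h))

lemma card_signs {k : ℕ} (hunif : KUniform k E) (e : E) :
    Fintype.card (e.1 → Bool) = 2 ^ k := by
  rw [Fintype.card_fun, Fintype.card_bool, Fintype.card_coe, hunif e.1 e.2]

lemma card_signing {k : ℕ} (hunif : KUniform k E) :
    Fintype.card (Signing E) = (2 ^ k) ^ E.card := by
  rw [Fintype.card_pi, prod_congr rfl fun e _ => card_signs hunif e, prod_const, card_univ,
    Fintype.card_coe]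

section

variable {V : Finset ℕ} (hVE : ∀ e ∈ E, e ⊆ V)

def falsifiedBy (a : V → Bool) : Signing E := fun e v => !a ⟨v, hVE _ e.2 v.2⟩

lemma ne_falsifiedBy_of_satisfies {α : Var → Bool} (hα : Satisfies α σ.formula) (e : E) :
    σ e ≠ falsifiedBy hVE (fun v => α v) e := by
  intro heq
  obtain ⟨⟨x, b⟩, hl, hαx⟩ := hα (σ.clause e) (mem_image_of_mem _ (mem_univ e))
  obtain ⟨hx, rfl⟩ := σ.mem_clause.1 hl
  rw [heq] at hαx
  simp [falsifiedBy] at hαx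

def avoidingSome : Finset (Signing E) :=
  univ.biUnion fun a : V → Bool => Fintype.piFinset fun e => univ.erase (falsifiedBy hVE a e)

lemma mem_avoidingSome_of_satisfies {α : Var → Bool} (hα : Satisfies α σ.formula) :
    σ ∈ avoidingSome hVE :=
  mem_biUnion.2 ⟨fun v => α v, mem_univ _, Fintype.mem_piFinset.2 fun e =>
    mem_erase.2 ⟨σ.ne_falsifiedBy_of_satisfies hVE hα e, mem_univ _⟩⟩

lemma card_avoidingSome_le {k : ℕ} (hunif : KUniform k E) :
    (avoidingSome hVE).card ≤ 2 ^ V.card * (2 ^ k - 1) ^ E.card := by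
  calc (avoidingSome hVE).card
      ≤ ∑ a : V → Bool, (Fintype.piFinset fun e => univ.erase (falsifiedBy hVE a e)).card :=
        card_biUnion_le
    _ = ∑ _a : V → Bool, (2 ^ k - 1) ^ E.card := by
        refine sum_congr rfl fun a _ => ?_
        simp only [Fintype.card_piFinset, card_erase_of_mem (mem_univ _), card_univ,
          card_signs hunif, prod_const, Fintype.card_coe]
    _ = 2 ^ V.card * (2 ^ k - 1) ^ E.card := by
        rw [sum_const, card_univ, Fintype.card_fun, Fintype.card_bool, Fintype.card_coe,
          smul_eq_mul]

end

lemma exists_unsat_formula {V : Finset ℕ} (hVE : ∀ e ∈ E, e ⊆ V) {k : ℕ}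
    (hunif : KUniform k E) (h : 2 ^ V.card * (2 ^ k - 1) ^ E.card < (2 ^ k) ^ E.card) :
    ∃ σ : Signing E, Unsat σ.formula := by
  obtain ⟨σ, -, hσ⟩ := exists_mem_notMem_of_card_lt_card (s := avoidingSome hVE) (t := univ)
    (by rw [card_univ, card_signing hunif]; exact (card_avoidingSome_le hVE hunif).trans_lt h)
  exact ⟨σ, fun ⟨α, hα⟩ => hσ (σ.mem_avoidingSome_of_satisfies hVE hα)⟩

end Signing

/-- If there is a linear `k`-uniform hypergraph with `n` vertices and `m`
hyperedges such that `m/n ≥ 2^k`, then there is an unsatisfiable linear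
`k`-CNF formula with `m` clauses. -/
theorem stmt0 (k n m : ℕ) (V : Finset ℕ) (E : Finset (Finset ℕ))
    (hVE : ∀ e ∈ E, e ⊆ V) (hV : V.card = n) (hE : E.card = m)
    (hunif : KUniform k E) (hlin : HypLinear E)
    (hdense : (2 : ℝ) ^ k ≤ (m : ℝ) / (n : ℝ)) :
    ∃ F : CNF, IsKCNF k F ∧ LinearCNF F ∧ Unsat F ∧ F.card = m := by
  have hn : n ≠ 0 := by
    rintro rfl
    rw [Nat.cast_zero, div_zero] at hdense
    exact (pow_pos two_pos k).not_ge hdense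
  have hm : 2 ^ k * n ≤ m := by exact_mod_cast (le_div_iff₀ (by positivity)).1 hdense
  obtain ⟨σ, hσ⟩ := Signing.exists_unsat_formula hVE hunif <| by
    rw [hV, hE]; exact two_pow_mul_pred_pow_lt_pow Nat.one_le_two_pow hn hm
  exact ⟨σ.formula, σ.isKCNF_formula hunif, σ.linearCNF_formula hlin, hσ,
    σ.card_formula.trans hE⟩
end

section
/- For every nonnegative integer d there exists a linear hypergraph that is (d,d)-rich and has exactly C(d+1,2) hyperedges; i.e., the bound C(d+1,2) in the richness lemma is tight. -/
def hypDegree (E : Finset (Finset ℕ)) (v : ℕ) : ℕ := (E.filter (fun e => v ∈ e)).card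


open Finset

lemma Finset.card_inter_lt_of_card_eq {α : Type*} [DecidableEq α] {e f : Finset α}
    (hne : e ≠ f) (hcard : #e = #f) : #(e ∩ f) < #e := by
  have hnsub : ¬ e ⊆ f := fun hsub => hne (eq_of_subset_of_card_le hsub hcard.ge)
  exact card_lt_card ⟨inter_subset_left, fun hsub => hnsub (hsub.trans inter_subset_right)⟩

lemma kUniform_powersetCard (k : ℕ) (s : Finset ℕ) : KUniform k (s.powersetCard k) :=
  fun _ he => (mem_powersetCard.mp he).2

lemma hypLinear_of_kUniform_two {E : Finset (Finset ℕ)} (hE : KUniform 2 E) : HypLinear E :=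
  fun e he f hf hne => by
    have h := card_inter_lt_of_card_eq hne ((hE e he).trans (hE f hf).symm)
    rw [hE e he] at h
    exact Nat.lt_succ_iff.mp h

lemma hypDegree_powersetCard_succ {s : Finset ℕ} {v : ℕ} (hv : v ∈ s) (n : ℕ) :
    hypDegree (s.powersetCard (n + 1)) v = (#s - 1).choose n := by
  have h := card_filter_powersetCard_subset {v} s (n + 1) (singleton_subset_iff.mpr hv)
    (by simp)
  simpa only [hypDegree, singleton_subset_iff, card_singleton, Nat.add_sub_cancel] using h

/-- For every `d` there is a linear hypergraph that is `(d,d)`-rich (at least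
`d` vertices of degree at least `d`) with exactly `C(d+1,2)` hyperedges. -/
theorem stmt6 (d : ℕ) :
    ∃ E : Finset (Finset ℕ), HypLinear E ∧
      (∃ S : Finset ℕ, d ≤ S.card ∧ ∀ v ∈ S, d ≤ hypDegree E v) ∧
      E.card = (d + 1).choose 2 := by
  refine ⟨(range (d + 1)).powersetCard 2,
    hypLinear_of_kUniform_two (kUniform_powersetCard 2 _), ⟨range (d + 1), by simp, ?_⟩,
    by rw [card_powersetCard, card_range]⟩
  intro v hv
  rw [hypDegree_powersetCard_succ hv 1]
  simp
end

section
/- There exists an unsatisfiable linear k-CNF formula with at most 4 k^2 4^k clauses, for every k ≥ 1. -/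
lemma aux1 (a : ℕ) (ha : 1 ≤ a) : 2 * a ^ a ≤ (a + 1) ^ a := by
  have ha' : (0:ℝ) < a := by exact_mod_cast ha
  have h1 : (1 : ℝ) + a * (1/a) ≤ (1 + 1/a)^a :=
    one_add_mul_le_pow (by have : (0:ℝ) ≤ 1/a := by positivity
                           linarith) a
  have h2 : (1:ℝ) + (a:ℝ) * (1/a) = 2 := by
    rw [mul_one_div, div_self (ne_of_gt ha')]; norm_num
  have h3 : ((1:ℝ) + 1/a)^a * a^a = ((a:ℝ)+1)^a := by
    rw [← mul_pow]; congr 1; field_simp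
  have h4 : (2:ℝ) * (a:ℝ)^a ≤ ((a:ℝ)+1)^a := by
    rw [← h3]
    have hp : (0:ℝ) ≤ (a:ℝ)^a := by positivity
    nlinarith [h1, h2]
  exact_mod_cast h4

lemma key_count (k q : ℕ) (hk : 1 ≤ k) (hq : k * 2^k < q) :
    2 ^ (k*q) * (2^k - 1) ^ (q*q) < (2^k) ^ (q*q) := by
  set m := 2^k with hm
  have hm2 : 2 ≤ m := by
    calc 2 = 2^1 := rfl
    _ ≤ 2^k := Nat.pow_le_pow_right (by norm_num) hk
  have hstep : 2 * (m-1)^m ≤ m^m := by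
    have h1 := aux1 (m-1) (by omega)
    have he : m - 1 + 1 = m := by omega
    rw [he] at h1
    calc 2 * (m-1)^m = 2 * (m-1)^(m-1) * (m-1) := by
          rw [mul_assoc, ← pow_succ, he]
      _ ≤ m^(m-1) * (m-1) := Nat.mul_le_mul_right _ h1
      _ ≤ m^(m-1) * m := Nat.mul_le_mul_left _ (by omega)
      _ = m^m := by rw [← pow_succ, he]
  have hqpos : 1 ≤ q := by nlinarith
  have hq1 : k*m*q + 1 ≤ q*q := by
    have h5 : (k*m+1) * q ≤ q*q := Nat.mul_le_mul_right q hq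
    nlinarith
  set r := q*q - k*m*q with hrdef
  have hco : m*(k*q) = k*m*q := by ring
  have hqq : q*q = m*(k*q) + r := by rw [hco]; omega
  have hr1 : 1 ≤ r := by omega
  calc 2^(k*q) * (m-1)^(q*q)
      = 2^(k*q) * (m-1)^(m*(k*q)) * (m-1)^r := by rw [hqq, pow_add]; ring
    _ < 2^(k*q) * (m-1)^(m*(k*q)) * m^r := by
        have h6 : (m-1)^r < m^r := Nat.pow_lt_pow_left (by omega) (by omega)
        have pos : 0 < 2^(k*q) * (m-1)^(m*(k*q)) :=
          Nat.mul_pos (Nat.pow_pos (by norm_num)) (Nat.pow_pos (by omega))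
        exact mul_lt_mul_of_pos_left h6 pos
    _ = (2*(m-1)^m)^(k*q) * m^r := by
        have e1 : (2*(m-1)^m)^(k*q) = 2^(k*q) * (m-1)^(m*(k*q)) := by
          rw [mul_pow, ← pow_mul]
        rw [e1]
    _ ≤ (m^m)^(k*q) * m^r := Nat.mul_le_mul_right _ (Nat.pow_le_pow_left hstep _)
    _ = m^(q*q) := by
        have e2 : (m^m)^(k*q) = m^(m*(k*q)) := (pow_mul m m (k*q)).symm
        rw [e2, ← pow_add, hqq]


lemma exists_good {E V P : Type*} [Fintype E] [DecidableEq E] [Fintype V] [DecidableEq V]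
    [Fintype P] [DecidableEq P] (bad : (V → Bool) → E → P)
    (h : 2 ^ Fintype.card V * (Fintype.card P - 1) ^ Fintype.card E
        < Fintype.card P ^ Fintype.card E) :
    ∃ S : E → P, ∀ β, ∃ e, S e = bad β e := by
  by_contra hc
  push_neg at hc
  have hsub : (Finset.univ : Finset (E → P)) ⊆
      Finset.univ.biUnion (fun β : V → Bool =>
        Fintype.piFinset fun e => Finset.univ.erase (bad β e)) := by
    intro S _
    obtain ⟨β, hβ⟩ := hc S
    refine Finset.mem_biUnion.mpr ⟨β, Finset.mem_univ _, ?_⟩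
    rw [Fintype.mem_piFinset]
    intro e
    exact Finset.mem_erase.mpr ⟨hβ e, Finset.mem_univ _⟩
  have h1 := (Finset.card_le_card hsub).trans Finset.card_biUnion_le
  have h2 : ∀ β : V → Bool,
      (Fintype.piFinset fun e : E => Finset.univ.erase (bad β e)).card
        = (Fintype.card P - 1) ^ Fintype.card E := by
    intro β
    rw [Fintype.card_piFinset]
    simp [Finset.card_erase_of_mem, Finset.card_univ]
  rw [Finset.card_univ, Fintype.card_fun] at h1
  rw [Finset.sum_congr rfl (fun β _ => h2 β), Finset.sum_const, Finset.card_univ,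
    Fintype.card_fun, Fintype.card_bool, smul_eq_mul] at h1
  omega


/-- There exists an unsatisfiable linear `k`-CNF formula with at most
`4 k² 4^k` clauses. -/
theorem stmt9 (k : ℕ) (hk : 1 ≤ k) :
    ∃ F : CNF, IsKCNF k F ∧ LinearCNF F ∧ Unsat F ∧
      F.card ≤ 4 * k ^ 2 * 4 ^ k := by
  obtain ⟨q, hqp, hql, hqu⟩ := Nat.bertrand (k * 2^k) (by positivity)
  haveI : Fact q.Prime := ⟨hqp⟩
  have hkq : k < q := by have h2 : 1 ≤ 2^k := Nat.one_le_two_pow; nlinarith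
  have hq0 : 0 < q := hqp.pos
  set vtx : ZMod q × ZMod q → Fin k → Fin k × ZMod q :=
    fun e i => (i, e.1 * ((i.val : ℕ) : ZMod q) + e.2) with hvtxdef
  set enc : Fin k × ZMod q → ℕ := fun v => v.1.val + k * v.2.val with hencdef
  have henc : Function.Injective enc := by
    rintro ⟨i, b⟩ ⟨j, c⟩ hyp
    simp only [hencdef] at hyp
    have hi := i.isLt; have hj := j.isLt
    have hb : b.val = c.val := by
      have h1 : (i.val + k * b.val) / k = b.val := by
        rw [Nat.add_mul_div_left _ _ (by omega : 0 < k), Nat.div_eq_of_lt hi]; omega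
      have h2 : (j.val + k * c.val) / k = c.val := by
        rw [Nat.add_mul_div_left _ _ (by omega : 0 < k), Nat.div_eq_of_lt hj]; omega
      rw [← h1, ← h2, hyp]
    have hij : i.val = j.val := by rw [hb] at hyp; omega
    exact Prod.ext (Fin.ext hij) (ZMod.val_injective q hb)
  have hxinj : ∀ i j : Fin k, ((i.val : ℕ) : ZMod q) = ((j.val : ℕ) : ZMod q) → i = j := by
    intro i j hcon
    have hv := congrArg ZMod.val hcon
    rw [ZMod.val_cast_of_lt (lt_trans i.isLt hkq),
      ZMod.val_cast_of_lt (lt_trans j.isLt hkq)] at hv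
    exact Fin.ext hv
  have hvtx : ∀ e, Function.Injective (vtx e) := by
    intro e i j hyp
    exact congrArg Prod.fst hyp
  have hcross : ∀ e e' (i j i' j' : Fin k), i ≠ j →
      vtx e i = vtx e' i' → vtx e j = vtx e' j' → e = e' := by
    intro e e' i j i' j' hij h1 h2
    have hi' : i = i' := congrArg Prod.fst h1
    have hj' : j = j' := congrArg Prod.fst h2
    subst hi'; subst hj'
    have e1 : e.1 * ((i.val : ℕ) : ZMod q) + e.2 = e'.1 * ((i.val : ℕ) : ZMod q) + e'.2 :=
      congrArg Prod.snd h1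
    have e2 : e.1 * ((j.val : ℕ) : ZMod q) + e.2 = e'.1 * ((j.val : ℕ) : ZMod q) + e'.2 :=
      congrArg Prod.snd h2
    have hx : ((i.val : ℕ) : ZMod q) ≠ ((j.val : ℕ) : ZMod q) := fun hcon => hij (hxinj i j hcon)
    have hz : (e.1 - e'.1) * (((i.val : ℕ) : ZMod q) - ((j.val : ℕ) : ZMod q)) = 0 := by
      linear_combination e1 - e2
    rcases mul_eq_zero.mp hz with h | h
    · have ha : e.1 = e'.1 := sub_eq_zero.mp h
      have hb : e.2 = e'.2 := by linear_combination e1 - ((i.val : ℕ) : ZMod q) * ha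
      exact Prod.ext ha hb
    · exact absurd (sub_eq_zero.mp h) hx
  have hcount : ∃ S : (ZMod q × ZMod q) → (Fin k → Bool),
      ∀ β : (Fin k × ZMod q) → Bool, ∃ e, S e = (fun i => ! β (vtx e i)) := by
    apply exists_good
    have c1 : Fintype.card (Fin k × ZMod q) = k * q := by simp [ZMod.card]
    have c2 : Fintype.card (Fin k → Bool) = 2^k := by simp
    have c3 : Fintype.card (ZMod q × ZMod q) = q * q := by simp [ZMod.card]
    rw [c1, c2, c3]
    exact key_count k q hk hql
  obtain ⟨S, hS⟩ := hcount
  set Cl : ZMod q × ZMod q → Clause :=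
    fun e => Finset.image (fun i => (enc (vtx e i), S e i)) Finset.univ with hCldef
  have hClinj : ∀ e, Function.Injective (fun i => (enc (vtx e i), S e i)) := by
    intro e i j hyp
    exact hvtx e (henc (congrArg Prod.fst hyp))
  refine ⟨Finset.image Cl Finset.univ, ?_, ?_, ?_, ?_⟩
  · intro C hC
    obtain ⟨e, -, rfl⟩ := Finset.mem_image.mp hC
    constructor
    · rintro x ⟨h1, h2⟩
      obtain ⟨i, -, hi⟩ := Finset.mem_image.mp h1
      obtain ⟨j, -, hj⟩ := Finset.mem_image.mp h2
      have hxe : enc (vtx e i) = enc (vtx e j) := by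
        rw [show enc (vtx e i) = x from congrArg Prod.fst hi,
          show enc (vtx e j) = x from congrArg Prod.fst hj]
      have : i = j := hvtx e (henc hxe)
      subst this
      have ht : S e i = true := congrArg Prod.snd hi
      have hf : S e i = false := congrArg Prod.snd hj
      simp [ht] at hf
    · rw [Finset.card_image_of_injective _ (hClinj e), Finset.card_univ, Fintype.card_fin]
  · intro C hC D hD hne
    obtain ⟨e, -, rfl⟩ := Finset.mem_image.mp hC
    obtain ⟨e', -, rfl⟩ := Finset.mem_image.mp hD
    by_contra hgt
    push_neg at hgt
    obtain ⟨x, hx, y, hy, hxy⟩ := Finset.one_lt_card.mp hgt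
    obtain ⟨hx1, hx2⟩ := Finset.mem_inter.mp hx
    obtain ⟨hy1, hy2⟩ := Finset.mem_inter.mp hy
    have hmem : ∀ (f : ZMod q × ZMod q) (z : Var), z ∈ vbl (Cl f) → ∃ i, enc (vtx f i) = z := by
      intro f z hz
      obtain ⟨l, hl, hlz⟩ := Finset.mem_image.mp hz
      obtain ⟨i, -, hi⟩ := Finset.mem_image.mp hl
      exact ⟨i, by rw [show enc (vtx f i) = l.1 from congrArg Prod.fst hi, hlz]⟩
    obtain ⟨i, hie⟩ := hmem e x hx1
    obtain ⟨i', hie'⟩ := hmem e' x hx2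
    obtain ⟨j, hje⟩ := hmem e y hy1
    obtain ⟨j', hje'⟩ := hmem e' y hy2
    have hij : i ≠ j := by
      intro hcon; subst hcon; exact hxy (hie ▸ hje)
    have hepair : e = e' := hcross e e' i j i' j' hij (henc (by rw [hie, hie'])) (henc (by rw [hje, hje']))
    exact hne (by rw [hepair])
  · rintro ⟨α, hα⟩
    obtain ⟨e, he⟩ := hS (fun v => α (enc v))
    obtain ⟨l, hl, hsat⟩ := hα (Cl e) (Finset.mem_image_of_mem Cl (Finset.mem_univ e))
    obtain ⟨i, -, rfl⟩ := Finset.mem_image.mp hl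
    have hne := congrFun he i
    simp only [] at hne hsat
    rw [hne] at hsat
    simp at hsat
  · calc (Finset.image Cl Finset.univ).card ≤ (Finset.univ : Finset (ZMod q × ZMod q)).card :=
        Finset.card_image_le
      _ = q * q := by rw [Finset.card_univ]; simp [ZMod.card]
      _ ≤ (2 * (k * 2^k)) * (2 * (k * 2^k)) := Nat.mul_le_mul hqu hqu
      _ = 4 * k ^ 2 * 4 ^ k := by
          rw [show (4:ℕ)^k = 2^k * 2^k by rw [show (4:ℕ) = 2*2 from rfl, mul_pow]]
          ring
end

section
/- For every k ≥ 0 there exists an unsatisfiable linear k-CNF formula. Moreover, one can construct a sequence F_k with |F_0| = 1 (the formula consisting of the empty clause) and |F_{k+1}| = |F_k| · 2^{|F_k|}. -/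
/-!
Start from the formula `{∅}`. Given an unsatisfiable linear `k`-CNF `G` with `m` clauses
`C₀, …, C_{m-1}`, take `2^m` variable-disjoint copies `G_α` indexed by `α : Fin m → Bool` and
add the literal `(y_j, α j)` on a fresh variable `y_j` to the `j`-th clause of `G_α`. An assignment
`δ` falsifies the clause `{(y_j, !δ y_j)}_j` of the complete formula, so it would have to satisfy
the copy `G_α` with `α j = !δ y_j` through its old literals, i.e. satisfy `G`. Two clauses of the
same copy share exactly the copies of the variables shared by the clauses of `G` they come from,
and two clauses of different copies share at most a fresh variable, so linearity is preserved.
-/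

section

open Finset

def Clause.rename (f : Var → Var) (C : Clause) : Clause := C.image (Prod.map f id)

namespace Clause

variable {f : Var → Var} {C : Clause}

lemma mem_rename {l : Lit} : l ∈ rename f C ↔ ∃ a ∈ C, (f a.1, a.2) = l := by
  simp [rename]

lemma card_rename (hf : f.Injective) : (rename f C).card = C.card :=
  card_image_of_injective _ (hf.prodMap Function.injective_id)

lemma vbl_rename : vbl (rename f C) = (vbl C).image f := by
  simp only [vbl, rename, image_image]
  rfl

lemma valid_rename (hf : f.Injective) (hC : Clause.valid C) : Clause.valid (rename f C) := by
  rintro x ⟨ht, hf'⟩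
  obtain ⟨a, ha, hax⟩ := mem_rename.1 ht
  obtain ⟨b, hb, hbx⟩ := mem_rename.1 hf'
  simp only [Prod.mk.injEq] at hax hbx
  have hab : a.1 = b.1 := hf (hax.1.trans hbx.1.symm)
  exact hC a.1 ⟨hax.2 ▸ ha, hab ▸ hbx.2 ▸ hb⟩

lemma valid_insert {l : Lit} (hC : Clause.valid C) (hl : l.1 ∉ vbl C) :
    Clause.valid (insert l C) := by
  have hvar : ∀ b, (l.1, b) ∉ C := fun b hb => hl (mem_image.2 ⟨_, hb, rfl⟩)
  rintro x ⟨ht, hf⟩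
  rw [mem_insert] at ht hf
  rcases ht with rfl | ht
  · rcases hf with hf | hf
    · exact Bool.noConfusion (congrArg Prod.snd hf)
    · exact hvar _ hf
  · rcases hf with rfl | hf
    · exact hvar _ ht
    · exact hC x ⟨ht, hf⟩

end Clause

lemma unsat_singleton_empty : Unsat {∅} := by
  rintro ⟨δ, hδ⟩
  obtain ⟨l, hl, -⟩ := hδ ∅ (mem_singleton_self _)
  exact notMem_empty l hl

lemma IsKCNF.card_le_one_of_empty_mem {k : ℕ} {G : CNF} (hG : IsKCNF k G) (h : ∅ ∈ G) :
    G.card ≤ 1 := by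
  have hk : k = 0 := (hG ∅ h).2.symm
  refine card_le_one.2 fun C hC D hD => ?_
  rw [card_eq_zero.1 ((hG C hC).2.trans hk), card_eq_zero.1 ((hG D hD).2.trans hk)]

/-- The fresh variable `y_j` of the construction; `copyVar c v` is the `c`-th copy of `v`. -/
def freshVar (j : ℕ) : Var := Nat.pair 0 j

def copyVar (c : ℕ) (v : Var) : Var := Nat.pair (c + 1) v

lemma freshVar_injective : freshVar.Injective := fun _ _ h => (Nat.pair_eq_pair.1 h).2

lemma copyVar_injective (c : ℕ) : (copyVar c).Injective := fun _ _ h => (Nat.pair_eq_pair.1 h).2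

lemma eq_of_copyVar_eq {c d : ℕ} {v w : Var} (h : copyVar c v = copyVar d w) : c = d := by
  have := (Nat.pair_eq_pair.1 h).1
  omega

lemma copyVar_ne_freshVar (c : ℕ) (v : Var) (j : ℕ) : copyVar c v ≠ freshVar j := fun h => by
  have := (Nat.pair_eq_pair.1 h).1
  omega

lemma freshVar_notMem_image_copyVar (c j : ℕ) (S : Finset Var) :
    freshVar j ∉ S.image (copyVar c) := by
  simp only [mem_image, not_exists, not_and]
  exact fun v _ => copyVar_ne_freshVar c v j

lemma disjoint_image_copyVar {c d : ℕ} (hcd : c ≠ d) (S T : Finset Var) :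
    Disjoint (S.image (copyVar c)) (T.image (copyVar d)) := by
  simp only [disjoint_left, mem_image, not_exists, not_and]
  rintro _ ⟨v, -, rfl⟩ w - h
  exact hcd (eq_of_copyVar_eq h.symm)

section Step

variable (G : CNF)

/-- The `j`-th clause (in the enumeration `G.equivFin`) of the copy of `G` indexed by `α`,
extended by the `j`-th literal of the complete clause `α`. -/
noncomputable def extendedClause (α : Fin G.card → Bool) (j : Fin G.card) : Clause :=
  insert (freshVar j, α j) (Clause.rename (copyVar (Encodable.encode α)) (G.equivFin.symm j).1)

noncomputable def nextFormula : CNF :=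
  univ.image fun p : (Fin G.card → Bool) × Fin G.card => extendedClause G p.1 p.2

variable {G}

lemma mem_nextFormula {D : Clause} :
    D ∈ nextFormula G ↔ ∃ α j, extendedClause G α j = D := by
  simp [nextFormula]

lemma vbl_extendedClause (α : Fin G.card → Bool) (j : Fin G.card) :
    vbl (extendedClause G α j) =
      insert (freshVar j) ((vbl (G.equivFin.symm j).1).image (copyVar (Encodable.encode α))) := by
  rw [extendedClause, vbl, image_insert, ← vbl, Clause.vbl_rename]

lemma freshVar_notMem_vbl_rename (C : Clause) (c j : ℕ) :
    freshVar j ∉ vbl (Clause.rename (copyVar c) C) := by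
  rw [Clause.vbl_rename]
  exact freshVar_notMem_image_copyVar c j _

lemma freshLit_notMem_rename (C : Clause) (c j : ℕ) (b : Bool) :
    (freshVar j, b) ∉ Clause.rename (copyVar c) C :=
  fun h => freshVar_notMem_vbl_rename C c j (mem_image.2 ⟨_, h, rfl⟩)

lemma freshLit_mem_extendedClause {α : Fin G.card → Bool} {i j : Fin G.card} {b : Bool} :
    (freshVar i, b) ∈ extendedClause G α j ↔ i = j ∧ b = α j := by
  rw [extendedClause, mem_insert, or_iff_left (freshLit_notMem_rename _ _ _ _), Prod.mk.injEq,
    freshVar_injective.eq_iff, Fin.val_inj]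

lemma card_extendedClause (α : Fin G.card → Bool) (j : Fin G.card) :
    (extendedClause G α j).card = (G.equivFin.symm j).1.card + 1 := by
  rw [extendedClause, card_insert_of_notMem (freshLit_notMem_rename _ _ _ _),
    Clause.card_rename (copyVar_injective _)]

lemma valid_extendedClause {j : Fin G.card} (hC : Clause.valid (G.equivFin.symm j).1)
    (α : Fin G.card → Bool) :
    Clause.valid (extendedClause G α j) :=
  Clause.valid_insert (Clause.valid_rename (copyVar_injective _) hC)
    (freshVar_notMem_vbl_rename _ _ _)

/-- The fresh literal of `extendedClause G α j` determines `j` and `α j`, any other literal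
determines `α`; an empty clause has no other literal, hence the hypothesis `hG`. -/
lemma extendedClause_injective (hG : ∅ ∈ G → G.card ≤ 1) :
    Function.Injective fun p : (Fin G.card → Bool) × Fin G.card => extendedClause G p.1 p.2 := by
  rintro ⟨α, i⟩ ⟨β, j⟩ h
  simp only at h
  obtain ⟨rfl, hαβ⟩ : i = j ∧ α i = β j :=
    freshLit_mem_extendedClause.1 (h ▸ freshLit_mem_extendedClause.2 ⟨rfl, rfl⟩)
  refine Prod.ext ?_ rfl
  rcases (G.equivFin.symm i).1.eq_empty_or_nonempty with hempty | ⟨l, hl⟩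
  · have : Subsingleton (Fin G.card) :=
      Fin.subsingleton_iff_le_one.2 (hG (hempty ▸ (G.equivFin.symm i).2))
    exact funext fun j => Subsingleton.elim j i ▸ hαβ
  · have hmem : (copyVar (Encodable.encode α) l.1, l.2) ∈ extendedClause G β i :=
      h ▸ mem_insert_of_mem (Clause.mem_rename.2 ⟨l, hl, rfl⟩)
    rcases mem_insert.1 hmem with hfresh | hold
    · exact absurd (congrArg Prod.fst hfresh) (copyVar_ne_freshVar _ _ _)
    · obtain ⟨a, -, ha⟩ := Clause.mem_rename.1 hold
      exact Encodable.encode_injective (eq_of_copyVar_eq (congrArg Prod.fst ha).symm)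

lemma card_nextFormula (hG : ∅ ∈ G → G.card ≤ 1) :
    (nextFormula G).card = G.card * 2 ^ G.card := by
  rw [nextFormula, card_image_of_injective _ (extendedClause_injective hG), card_univ,
    Fintype.card_prod, Fintype.card_fun, Fintype.card_bool, Fintype.card_fin, mul_comm]

lemma IsKCNF.nextFormula {k : ℕ} (hG : IsKCNF k G) : IsKCNF (k + 1) (nextFormula G) := by
  rintro D hD
  obtain ⟨α, j, rfl⟩ := mem_nextFormula.1 hD
  obtain ⟨hvalid, hcard⟩ := hG _ (G.equivFin.symm j).2
  exact ⟨valid_extendedClause hvalid α, by rw [card_extendedClause, hcard]⟩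

lemma LinearCNF.nextFormula (hG : LinearCNF G) : LinearCNF (nextFormula G) := by
  rintro _ hD₁ _ hD₂ hne
  obtain ⟨α, i, rfl⟩ := mem_nextFormula.1 hD₁
  obtain ⟨β, j, rfl⟩ := mem_nextFormula.1 hD₂
  rw [vbl_extendedClause, vbl_extendedClause]
  by_cases hαβ : α = β
  · subst hαβ
    have hij : i ≠ j := by rintro rfl; exact hne rfl
    have hfresh : freshVar i ≠ freshVar j :=
      fun h => hij (Fin.val_injective (freshVar_injective h))
    have hnot : freshVar i ∉ insert (freshVar j)
        ((vbl (G.equivFin.symm j).1).image (copyVar (Encodable.encode α))) := by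
      rw [mem_insert, not_or]
      exact ⟨hfresh, freshVar_notMem_image_copyVar _ _ _⟩
    rw [insert_inter_of_notMem hnot, inter_insert_of_notMem (freshVar_notMem_image_copyVar _ _ _),
      ← image_inter _ _ (copyVar_injective _)]
    refine card_image_le.trans (hG _ (G.equivFin.symm i).2 _ (G.equivFin.symm j).2 ?_)
    exact fun h => hij (G.equivFin.symm.injective (Subtype.ext h))
  · have hdisj := disjoint_image_copyVar (mt (@Encodable.encode_injective _ _ α β) hαβ)
      (vbl (G.equivFin.symm i).1) (vbl (G.equivFin.symm j).1)
    refine card_le_one_iff_subset_singleton.2 ⟨freshVar i, fun x hx => ?_⟩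
    simp only [mem_inter, mem_insert] at hx
    obtain ⟨rfl | hxS, hy⟩ := hx
    · exact mem_singleton_self _
    · rcases hy with rfl | hxT
      · exact absurd hxS (freshVar_notMem_image_copyVar _ _ _)
      · exact absurd hxT (disjoint_left.1 hdisj hxS)

lemma Unsat.nextFormula (hG : Unsat G) : Unsat (nextFormula G) := by
  rintro ⟨δ, hδ⟩
  let α : Fin G.card → Bool := fun j => !δ (freshVar j)
  refine hG ⟨δ ∘ copyVar (Encodable.encode α), fun C hC => ?_⟩
  obtain ⟨l, hl, hδl⟩ := hδ _ (mem_nextFormula.2 ⟨α, G.equivFin ⟨C, hC⟩, rfl⟩)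
  rw [extendedClause, Equiv.symm_apply_apply, mem_insert] at hl
  rcases hl with rfl | hl
  · simp [α] at hδl
  · obtain ⟨a, ha, rfl⟩ := Clause.mem_rename.1 hl
    exact ⟨a, ha, hδl⟩

end Step

noncomputable def linearUnsatFormula : ℕ → CNF
  | 0 => {∅}
  | k + 1 => nextFormula (linearUnsatFormula k)

lemma linearUnsatFormula_spec (k : ℕ) :
    IsKCNF k (linearUnsatFormula k) ∧ LinearCNF (linearUnsatFormula k) ∧
      Unsat (linearUnsatFormula k) := by
  induction k with
  | zero =>
    refine ⟨fun C hC => ?_, fun C hC D hD hne => ?_, unsat_singleton_empty⟩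
    · obtain rfl := mem_singleton.1 hC
      exact ⟨fun x hx => notMem_empty _ hx.1, rfl⟩
    · exact absurd ((mem_singleton.1 hC).trans (mem_singleton.1 hD).symm) hne
  | succ k ih =>
    exact ⟨ih.1.nextFormula, ih.2.1.nextFormula, ih.2.2.nextFormula⟩

end

/-- For every `k ≥ 0` there exists an unsatisfiable linear `k`-CNF formula
`F_k`, with `|F_0| = 1` and `|F_{k+1}| = |F_k| · 2^{|F_k|}`. -/
theorem stmt10 :
    ∃ F : ℕ → CNF,
      (∀ k, IsKCNF k (F k) ∧ LinearCNF (F k) ∧ Unsat (F k)) ∧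
      (F 0).card = 1 ∧
      (∀ k, (F (k + 1)).card = (F k).card * 2 ^ (F k).card) :=
  ⟨linearUnsatFormula, linearUnsatFormula_spec, Finset.card_singleton _, fun k =>
    card_nextFormula ((linearUnsatFormula_spec k).1.card_le_one_of_empty_mem)⟩
end

section
/- Let F be a weakly linear k-CNF formula, and fix a sequence of partial assignments α_0 ⊆ α_1 ⊆ … where α_{i+1} extends α_i by fixing one additional variable. Let F_i be the formula obtained from F by applying α_i (removing satisfied clauses and falsified literals). Then for every variable x, the number of clauses of size exactly k−1 in F_{i} containing x or ¬x is at most 2i. -/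
/-- Apply a partial assignment to a formula: clauses containing a true literal
are removed, and false literals are removed from the remaining clauses. -/
def applyPA (β : Var → Option Bool) (F : CNF) : CNF :=
  (F.filter (fun C => ¬ ∃ l ∈ C, β l.1 = some l.2)).image
    (fun C => C.filter (fun l => β l.1 ≠ some (!l.2)))

/-!
Fixing one more variable `y := b` can only create a clause of `F_{i+1}` that was not in `F_i` by
deleting the falsified literal `(y, !b)` from a clause of `F`. Two new clauses sharing a literal
`l` would come from clauses of `F` that share both `l` and `(y, !b)`, which weak linearity forbids.
So each step creates at most one new clause per literal of `x`, hence at most two clauses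
containing `x`, while `F_0 = F` has no clause of size `k - 1` at all.
-/

open Function

def Clause.restrict (β : Var → Option Bool) (C : Clause) : Clause :=
  C.filter (fun l => β l.1 ≠ some (!l.2))

lemma mem_vbl {C : Clause} {x : Var} : x ∈ vbl C ↔ ∃ c, (x, c) ∈ C := by
  simp [vbl]

lemma WeaklyLinear.eq_of_mem_of_mem {F : CNF} (hw : WeaklyLinear F) {C D : Clause}
    (hC : C ∈ F) (hD : D ∈ F) {l m : Lit} (hlm : l ≠ m)
    (hlC : l ∈ C) (hmC : m ∈ C) (hlD : l ∈ D) (hmD : m ∈ D) : C = D := by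
  by_contra hCD
  have hsub : ({l, m} : Finset Lit) ⊆ C ∩ D := by
    simp [Finset.insert_subset_iff, hlC, hmC, hlD, hmD]
  have := Finset.card_le_card hsub
  rw [Finset.card_pair hlm] at this
  have := hw C hC D hD hCD
  omega

lemma mem_applyPA {β : Var → Option Bool} {F : CNF} {D : Clause} :
    D ∈ applyPA β F ↔ ∃ C ∈ F, (¬ ∃ l ∈ C, β l.1 = some l.2) ∧ Clause.restrict β C = D := by
  simp only [applyPA, Clause.restrict, Finset.mem_image, Finset.mem_filter, and_assoc]

lemma applyPA_none (F : CNF) : applyPA (fun _ => none) F = F := by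
  simp [applyPA]

section update

variable {β : Var → Option Bool} {y : Var} {b : Bool} {F : CNF}

lemma exists_clause_of_mem_applyPA_update_sdiff (hy : β y = none) {D : Clause}
    (hD : D ∈ applyPA (update β y (some b)) F \ applyPA β F) :
    ∃ C ∈ F, (y, !b) ∈ C ∧ Clause.restrict (update β y (some b)) C = D := by
  obtain ⟨hD', hDnew⟩ := Finset.mem_sdiff.1 hD
  obtain ⟨C, hC, hunsat, rfl⟩ := mem_applyPA.1 hD'
  refine ⟨C, hC, ?_, rfl⟩
  by_contra hyb
  refine hDnew (mem_applyPA.2 ⟨C, hC, ?_, ?_⟩)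
  · rintro ⟨l, hl, hsat⟩
    have hly : l.1 ≠ y := by rintro h; rw [h, hy] at hsat; cases hsat
    exact hunsat ⟨l, hl, by rwa [update_of_ne hly]⟩
  · refine Finset.filter_congr fun l hl => ?_
    by_cases hly : l.1 = y
    · have hlb : l.2 = b := by
        by_contra h
        exact hyb (by rwa [show l = (y, !b) from Prod.ext hly (Bool.eq_not.2 h)] at hl)
      simp [hly, hy, hlb]
    · rw [update_of_ne hly]

lemma card_filter_mem_applyPA_update_sdiff_le_one (hw : WeaklyLinear F) (hy : β y = none)
    (l : Lit) :
    ((applyPA (update β y (some b)) F \ applyPA β F).filter (l ∈ ·)).card ≤ 1 := by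
  refine Finset.card_le_one.2 fun D₁ h₁ D₂ h₂ => ?_
  rw [Finset.mem_filter] at h₁ h₂
  obtain ⟨C₁, hC₁, hy₁, rfl⟩ := exists_clause_of_mem_applyPA_update_sdiff hy h₁.1
  obtain ⟨C₂, hC₂, hy₂, rfl⟩ := exists_clause_of_mem_applyPA_update_sdiff hy h₂.1
  have hl₁ := Finset.mem_filter.1 h₁.2
  have hl₂ := Finset.mem_filter.1 h₂.2
  have hly : l ≠ (y, !b) := by
    rintro rfl
    simp at hl₁
  rw [hw.eq_of_mem_of_mem hC₁ hC₂ hly hl₁.1 hy₁ hl₂.1 hy₂]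

lemma card_filter_vbl_applyPA_update_sdiff_le_two (hw : WeaklyLinear F) (hy : β y = none)
    (x : Var) :
    ((applyPA (update β y (some b)) F \ applyPA β F).filter (x ∈ vbl ·)).card ≤ 2 := by
  set N := applyPA (update β y (some b)) F \ applyPA β F
  calc (N.filter (x ∈ vbl ·)).card
      ≤ (N.filter ((x, true) ∈ ·) ∪ N.filter ((x, false) ∈ ·)).card := by
        refine Finset.card_le_card fun D hD => ?_
        obtain ⟨hDN, c, hc⟩ := Finset.mem_filter.1 hD |>.imp_right mem_vbl.1
        cases c <;> simp [hDN, hc]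
    _ ≤ 1 + 1 := (Finset.card_union_le _ _).trans <| add_le_add
        (card_filter_mem_applyPA_update_sdiff_le_one hw hy _)
        (card_filter_mem_applyPA_update_sdiff_le_one hw hy _)

lemma card_filter_applyPA_update_le (hw : WeaklyLinear F) (hy : β y = none) (x : Var)
    (P : Clause → Prop) [DecidablePred P] (hP : ∀ D, P D → x ∈ vbl D) :
    ((applyPA (update β y (some b)) F).filter P).card ≤ ((applyPA β F).filter P).card + 2 := by
  set new := applyPA (update β y (some b)) F
  set old := applyPA β F
  have hsub : new.filter P \ old.filter P ⊆ (new \ old).filter (x ∈ vbl ·) := by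
    intro D hD
    simp only [Finset.mem_sdiff, Finset.mem_filter, not_and] at hD ⊢
    exact ⟨⟨hD.1.1, fun h => hD.2 h hD.1.2⟩, hP D hD.1.2⟩
  calc (new.filter P).card ≤ (new.filter P \ old.filter P).card + (old.filter P).card :=
        Finset.card_le_card_sdiff_add_card
    _ ≤ 2 + (old.filter P).card := by
        gcongr
        exact (Finset.card_le_card hsub).trans
          (card_filter_vbl_applyPA_update_sdiff_le_two hw hy x)
    _ = (old.filter P).card + 2 := add_comm _ _

end update

/-- Along a chain of partial assignments each extending the previous one by
one variable, the number of `(k-1)`-clauses of `F_i` containing a given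
variable `x` is at most `2i`, for a weakly linear `k`-CNF formula `F`. -/
theorem stmt12 (k : ℕ) (F : CNF) (hF : IsKCNF k F) (hw : WeaklyLinear F)
    (α : ℕ → Var → Option Bool)
    (h0 : ∀ x, α 0 x = none)
    (hstep : ∀ i, ∃ y b, α i y = none ∧ α (i + 1) = Function.update (α i) y (some b))
    (i : ℕ) (x : Var) :
    ((applyPA (α i) F).filter (fun C => C.card = k - 1 ∧ x ∈ vbl C)).card ≤ 2 * i := by
  induction i with
  | zero =>
    rw [show α 0 = fun _ => none from funext h0, applyPA_none, Nat.mul_zero,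
      Nat.le_zero, Finset.card_eq_zero, Finset.filter_eq_empty_iff]
    rintro C hC ⟨hcard, hx⟩
    obtain ⟨c, hc⟩ := mem_vbl.1 hx
    have := Finset.card_pos.2 ⟨_, hc⟩
    have := (hF C hC).2
    omega
  | succ i ih =>
    obtain ⟨y, b, hy, hupd⟩ := hstep i
    rw [hupd]
    exact (card_filter_applyPA_update_le hw hy x _ fun _ => And.right).trans (by omega)
end

section
/- Let G be a graph containing t pairwise edge-disjoint (i+1)-cliques, and suppose there is a vertex set U with |U| = s such that G − U contains no (i+1)-clique. Then some vertex v ∈ U lies in at least ⌈t/s⌉ of these edge-disjoint (i+1)-cliques, and consequently G contains at least ⌈t/s⌉ pairwise vertex-disjoint i-cliques. -/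
/-- If `G` contains `t` pairwise edge-disjoint `(i+1)`-cliques and a set `U`
of `s > 0` vertices meets every `(i+1)`-clique, then some `v ∈ U` lies in at
least `⌈t/s⌉` of the given cliques, and `G` contains at least `⌈t/s⌉`
pairwise vertex-disjoint `i`-cliques. -/
theorem stmt16 {V : Type*} [Fintype V] [DecidableEq V] (G : SimpleGraph V)
    (i t s : ℕ) (hs : 0 < s)
    (𝒦 : Finset (Finset V)) (hcard : 𝒦.card = t)
    (hclique : ∀ K ∈ 𝒦, G.IsNClique (i + 1) K)
    (hedisj : ∀ K ∈ 𝒦, ∀ L ∈ 𝒦, K ≠ L → (K ∩ L).card ≤ 1)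
    (U : Finset V) (hU : U.card = s)
    (hhit : ∀ K : Finset V, G.IsNClique (i + 1) K → ∃ u ∈ K, u ∈ U) :
    (∃ v ∈ U, (t + s - 1) / s ≤ (𝒦.filter (fun K => v ∈ K)).card) ∧
    (∃ 𝒞 : Finset (Finset V), (t + s - 1) / s ≤ 𝒞.card ∧
      (∀ K ∈ 𝒞, G.IsNClique i K) ∧
      (∀ K ∈ 𝒞, ∀ L ∈ 𝒞, K ≠ L → Disjoint K L)) := by
  -- pigeonhole: some v ∈ U with t ≤ count v * s
  have hsum : t ≤ ∑ v ∈ U, (𝒦.filter (fun K => v ∈ K)).card := by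
    calc t = ∑ K ∈ 𝒦, 1 := by simp [hcard]
    _ ≤ ∑ K ∈ 𝒦, (U.filter (fun v => v ∈ K)).card := by
        apply Finset.sum_le_sum
        intro K hK
        obtain ⟨u, huK, huU⟩ := hhit K (hclique K hK)
        have : u ∈ U.filter (fun v => v ∈ K) := Finset.mem_filter.2 ⟨huU, huK⟩
        exact Finset.card_pos.2 ⟨u, this⟩
    _ = ∑ v ∈ U, (𝒦.filter (fun K => v ∈ K)).card := by
        simp only [Finset.card_filter]
        rw [Finset.sum_comm]
  obtain ⟨v, hvU, hv⟩ : ∃ v ∈ U, t ≤ (𝒦.filter (fun K => v ∈ K)).card * s := by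
    by_contra h
    push_neg at h
    have ht : 0 < t := by
      obtain ⟨v, hvU⟩ := Finset.card_pos.1 (hU ▸ hs)
      exact Nat.pos_of_ne_zero fun h0 => by simpa [h0] using h v hvU
    have : ∀ v ∈ U, (𝒦.filter (fun K => v ∈ K)).card ≤ (t - 1) / s := by
      intro v hvU
      rw [Nat.le_div_iff_mul_le hs]
      have := h v hvU
      omega
    have := Finset.sum_le_sum this
    simp only [Finset.sum_const, hU, smul_eq_mul] at this
    have h2 : s * ((t - 1) / s) ≤ t - 1 := Nat.mul_div_le _ _
    omega
  set c := (𝒦.filter (fun K => v ∈ K)).card with hc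
  have hceil : (t + s - 1) / s ≤ c := by
    rw [Nat.div_le_iff_le_mul_add_pred hs]
    have h2 : s * c = c * s := Nat.mul_comm s c
    omega
  refine ⟨⟨v, hvU, hceil⟩, (𝒦.filter (fun K => v ∈ K)).image (fun K => K.erase v), ?_, ?_, ?_⟩
  · rw [Finset.card_image_of_injOn]
    · exact hceil
    intro K hK L hL hKL
    have hvK : v ∈ K := (Finset.mem_filter.1 hK).2
    have hvL : v ∈ L := (Finset.mem_filter.1 hL).2
    rw [← Finset.insert_erase hvK, ← Finset.insert_erase hvL]
    exact congrArg (insert v) hKL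
  · intro K' hK'
    obtain ⟨K, hK, rfl⟩ := Finset.mem_image.1 hK'
    have hK𝒦 := (Finset.mem_filter.1 hK).1
    have hvK := (Finset.mem_filter.1 hK).2
    have h1 := hclique K hK𝒦
    exact ⟨h1.1.subset (by simp [Finset.erase_subset]),
      by rw [Finset.card_erase_of_mem hvK, h1.2]; omega⟩
  · intro K' hK' L' hL' hne
    obtain ⟨K, hK, rfl⟩ := Finset.mem_image.1 hK'
    obtain ⟨L, hL, rfl⟩ := Finset.mem_image.1 hL'
    have hvK := (Finset.mem_filter.1 hK).2
    have hvL := (Finset.mem_filter.1 hL).2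
    have hKL : K ≠ L := fun h => hne (by rw [h])
    have hcard1 := hedisj K (Finset.mem_filter.1 hK).1 L (Finset.mem_filter.1 hL).1 hKL
    rw [Finset.disjoint_left]
    intro x hxK hxL
    have hxne : x ≠ v := (Finset.mem_erase.1 hxK).1
    have hx : x ∈ K ∩ L := Finset.mem_inter.2
      ⟨Finset.mem_of_mem_erase hxK, Finset.mem_of_mem_erase hxL⟩
    have hv' : v ∈ K ∩ L := Finset.mem_inter.2 ⟨hvK, hvL⟩
    have : ({x, v} : Finset V).card ≤ (K ∩ L).card :=
      Finset.card_le_card (by intro y hy; simp at hy; rcases hy with rfl | rfl <;> assumption)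
    rw [Finset.card_pair hxne] at this
    omega
end

section
/- Let F be a weakly b-linear k-CNF formula (b ≥ 1), and let ℓ be the number of literals occurring in at least f_occ(k−b)+1 clauses of F. If C(ℓ−1, b) ≤ f_occ(k−b), then F is satisfiable. -/
/-- The number of clauses of `F` containing the literal `u`. -/
def occCount (F : CNF) (u : Lit) : ℕ := (F.filter (fun C => u ∈ C)).card

/-- `focc j` is the largest `d` such that every `j`-CNF formula in which every
literal occurs in at most `d` clauses is satisfiable. -/
noncomputable def focc (j : ℕ) : ℕ :=
  sSup {d : ℕ | ∀ F : CNF, IsKCNF j F → (∀ u : Lit, occCount F u ≤ d) → ∃ α, Satisfies α F}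

/-- A CNF formula is weakly `b`-linear if any two distinct clauses share at
most `b` literals. -/
def WeaklyBLinear (b : ℕ) (F : CNF) : Prop :=
  ∀ C ∈ F, ∀ D ∈ F, C ≠ D → (C ∩ D).card ≤ b

lemma occCount_pos {F : CNF} {C : Clause} {u : Lit} (hC : C ∈ F) (hu : u ∈ C) :
    0 < occCount F u :=
  Finset.card_pos.mpr ⟨C, Finset.mem_filter.mpr ⟨hC, hu⟩⟩

lemma satisfies_empty (α : Var → Bool) : Satisfies α ∅ := by
  simp [Satisfies]

lemma Satisfies.of_forall_exists_subset {α : Var → Bool} {F G : CNF} (hG : Satisfies α G)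
    (h : ∀ C ∈ F, ∃ D ∈ G, D ⊆ C) : Satisfies α F := by
  intro C hC
  obtain ⟨D, hD, hDC⟩ := h C hC
  obtain ⟨l, hl, hαl⟩ := hG D hD
  exact ⟨l, hDC hl, hαl⟩

lemma Clause.valid.mono {C D : Clause} (hC : C.valid) (hDC : D ⊆ C) : D.valid :=
  fun x hx => hC x ⟨hDC hx.1, hDC hx.2⟩

lemma IsKCNF.eq_empty_of_occCount_eq_zero {j : ℕ} {F : CNF} (hj : 0 < j) (hF : IsKCNF j F)
    (hocc : ∀ u, occCount F u ≤ 0) : F = ∅ := by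
  refine Finset.eq_empty_of_forall_notMem fun C hC => ?_
  obtain ⟨u, hu⟩ : C.Nonempty := Finset.card_pos.mp ((hF C hC).2 ▸ hj)
  exact (occCount_pos hC hu).ne' (Nat.le_zero.mp (hocc u))

-- `sSup` of an unbounded set of naturals is `0`, which is a valid bound as well.
lemma satisfiable_of_occCount_le_focc {j : ℕ} {F : CNF} (hj : 0 < j) (hF : IsKCNF j F)
    (hocc : ∀ u, occCount F u ≤ focc j) : ∃ α, Satisfies α F := by
  set S := {d : ℕ | ∀ F : CNF, IsKCNF j F → (∀ u : Lit, occCount F u ≤ d) → ∃ α, Satisfies α F}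
  have hS0 : 0 ∈ S := fun G hG hG0 =>
    ⟨fun _ => true, hG.eq_empty_of_occCount_eq_zero hj hG0 ▸ satisfies_empty _⟩
  have hfocc : focc j ∈ S := by
    by_cases hbdd : BddAbove S
    · exact Nat.sSup_mem ⟨0, hS0⟩ hbdd
    · change sSup S ∈ S
      rwa [csSup_of_not_bddAbove hbdd, csSup_empty]
  exact hfocc F hF hocc

lemma focc_zero : focc 0 = 0 := by
  have hempty : IsKCNF 0 {∅} := by simp [IsKCNF, Clause.valid]
  have hunsat : ¬ ∃ α, Satisfies α {∅} := by simp [Satisfies]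
  have hS : {d : ℕ | ∀ F : CNF, IsKCNF 0 F → (∀ u : Lit, occCount F u ≤ d) →
      ∃ α, Satisfies α F} = ∅ :=
    Set.eq_empty_of_forall_notMem fun _ hd =>
      hunsat (hd _ hempty fun u => by simp [occCount, Finset.filter_singleton])
  rw [focc, hS, csSup_empty]
  rfl

lemma WeaklyBLinear.eq_of_lt_card {b : ℕ} {F : CNF} (hbl : WeaklyBLinear b F) {C D : Clause}
    (hC : C ∈ F) (hD : D ∈ F) {s : Finset Lit} (hs : s ⊆ C ∩ D) (hbs : b < s.card) : C = D := by
  by_contra hne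
  exact (hbl C hC D hD hne).not_gt (hbs.trans_le (Finset.card_le_card hs))

def heavyLits (F : CNF) (d : ℕ) : Finset Lit :=
  (F.biUnion id).filter (fun u => d + 1 ≤ occCount F u)

lemma mem_heavyLits {F : CNF} {d : ℕ} {u : Lit} : u ∈ heavyLits F d ↔ d < occCount F u := by
  refine ⟨fun hu => (Finset.mem_filter.mp hu).2, fun hu => Finset.mem_filter.mpr ⟨?_, hu⟩⟩
  obtain ⟨C, hC⟩ := Finset.card_pos.mp (d.zero_le.trans_lt hu)
  exact Finset.mem_biUnion.mpr ⟨C, (Finset.mem_filter.mp hC).1, (Finset.mem_filter.mp hC).2⟩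

lemma satisfiable_of_subset_of_card_le {k : ℕ} {F : CNF} (hF : IsKCNF k F) (hk : 0 < k)
    {L : Finset Lit} (hFL : ∀ C ∈ F, C ⊆ L) (hLk : L.card ≤ k) : ∃ α, Satisfies α F := by
  have heq : ∀ C ∈ F, C = L := fun C hC =>
    Finset.eq_of_subset_of_card_le (hFL C hC) (by rw [(hF C hC).2]; exact hLk)
  rcases F.eq_empty_or_nonempty with rfl | ⟨C₀, hC₀⟩
  · exact ⟨fun _ => true, satisfies_empty _⟩
  obtain ⟨l, hl⟩ : C₀.Nonempty := Finset.card_pos.mp ((hF C₀ hC₀).2 ▸ hk)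
  exact ⟨fun _ => l.2, fun C hC => ⟨l, heq C hC ▸ heq C₀ hC₀ ▸ hl, rfl⟩⟩

lemma Finset.exists_subset_card_eq_inter_subset_or_subset {α : Type*} [DecidableEq α]
    {s t : Finset α} {n : ℕ} (hn : n ≤ s.card) :
    ∃ u ⊆ s, u.card = n ∧ (s ∩ t ⊆ u ∨ u ⊆ t) := by
  rcases le_total (s ∩ t).card n with hst | hst
  · obtain ⟨u, hstu, hus, hu⟩ := Finset.exists_subsuperset_card_eq Finset.inter_subset_left hst hn
    exact ⟨u, hus, hu, Or.inl hstu⟩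
  · obtain ⟨u, hust, hu⟩ := Finset.exists_subset_card_eq hst
    exact ⟨u, hust.trans Finset.inter_subset_left, hu,
      Or.inr (hust.trans Finset.inter_subset_right)⟩

def trimCNF (F : CNF) (B : Clause → Clause) : CNF := F.image fun C => C \ B C

lemma IsKCNF.exists_trim {k b : ℕ} {F : CNF} (hF : IsKCNF k F) (hbk : b ≤ k) (L : Finset Lit) :
    ∃ B : Clause → Clause, ∀ C ∈ F, B C ⊆ C ∧ (B C).card = b ∧ (C ∩ L ⊆ B C ∨ B C ⊆ L) := by
  choose! B hB using fun C (hC : C ∈ F) =>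
    Finset.exists_subset_card_eq_inter_subset_or_subset (t := L) ((hF C hC).2 ▸ hbk)
  exact ⟨B, hB⟩

section Trim

variable {F : CNF} {B : Clause → Clause} {b : ℕ}

lemma Satisfies.of_trimCNF {α : Var → Bool} (h : Satisfies α (trimCNF F B)) : Satisfies α F :=
  h.of_forall_exists_subset fun C hC =>
    ⟨C \ B C, Finset.mem_image_of_mem _ hC, Finset.sdiff_subset⟩

lemma IsKCNF.trimCNF {k : ℕ} (hF : IsKCNF k F) (hB : ∀ C ∈ F, B C ⊆ C ∧ (B C).card = b) :
    IsKCNF (k - b) (trimCNF F B) := by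
  intro C' hC'
  obtain ⟨C, hC, rfl⟩ := Finset.mem_image.mp hC'
  refine ⟨(hF C hC).1.mono Finset.sdiff_subset, ?_⟩
  rw [Finset.card_sdiff_of_subset (hB C hC).1, (hB C hC).2, (hF C hC).2]

lemma occCount_trimCNF_le (u : Lit) :
    occCount (trimCNF F B) u ≤ (F.filter fun C => u ∈ C \ B C).card := by
  rw [occCount, trimCNF, Finset.filter_image]
  exact Finset.card_image_le

lemma card_filter_mem_sdiff_le_choose (hbl : WeaklyBLinear b F)
    (hB : ∀ C ∈ F, B C ⊆ C ∧ (B C).card = b) {u : Lit} {M : Finset Lit}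
    (hM : ∀ C ∈ F, u ∈ C \ B C → B C ⊆ M) :
    (F.filter fun C => u ∈ C \ B C).card ≤ M.card.choose b := by
  rw [← Finset.card_powersetCard]
  refine Finset.card_le_card_of_injOn B (fun C hC => ?_) fun C hC D hD hCD => ?_
  · obtain ⟨hCF, huC⟩ := Finset.mem_filter.mp hC
    exact Finset.mem_powersetCard.mpr ⟨hM C hCF huC, (hB C hCF).2⟩
  · obtain ⟨hCF, huC⟩ := Finset.mem_filter.mp hC
    obtain ⟨hDF, huD⟩ := Finset.mem_filter.mp hD
    obtain ⟨huC, huBC⟩ := Finset.mem_sdiff.mp huC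
    have hsub : insert u (B C) ⊆ C ∩ D := Finset.insert_subset
      (Finset.mem_inter.mpr ⟨huC, (Finset.mem_sdiff.mp huD).1⟩)
      (Finset.subset_inter (hB C hCF).1 (hCD ▸ (hB D hDF).1))
    refine hbl.eq_of_lt_card hCF hDF hsub ?_
    rw [Finset.card_insert_of_notMem huBC, (hB C hCF).2]
    exact b.lt_succ_self

lemma occCount_trimCNF_le_of_choose_le (hbl : WeaklyBLinear b F) {d : ℕ}
    (hB : ∀ C ∈ F, B C ⊆ C ∧ (B C).card = b ∧ (C ∩ heavyLits F d ⊆ B C ∨ B C ⊆ heavyLits F d))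
    (hchoose : ((heavyLits F d).card - 1).choose b ≤ d) (u : Lit) :
    occCount (trimCNF F B) u ≤ d := by
  refine (occCount_trimCNF_le u).trans ?_
  by_cases hu : u ∈ heavyLits F d
  · have hM : ∀ C ∈ F, u ∈ C \ B C → B C ⊆ (heavyLits F d).erase u := by
      intro C hC huC
      obtain ⟨huC, huBC⟩ := Finset.mem_sdiff.mp huC
      have hBL : B C ⊆ heavyLits F d := (hB C hC).2.2.resolve_left fun h =>
        huBC (h (Finset.mem_inter.mpr ⟨huC, hu⟩))
      exact fun v hv => Finset.mem_erase.mpr ⟨fun hvu => huBC (hvu ▸ hv), hBL hv⟩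
    calc (F.filter fun C => u ∈ C \ B C).card
        ≤ ((heavyLits F d).erase u).card.choose b :=
          card_filter_mem_sdiff_le_choose hbl (fun C hC => ⟨(hB C hC).1, (hB C hC).2.1⟩) hM
      _ = ((heavyLits F d).card - 1).choose b := by rw [Finset.card_erase_of_mem hu]
      _ ≤ d := hchoose
  · refine (Finset.card_le_card fun C hC => ?_).trans (not_lt.mp (mem_heavyLits.not.mp hu))
    obtain ⟨hCF, huC⟩ := Finset.mem_filter.mp hC
    exact Finset.mem_filter.mpr ⟨hCF, (Finset.mem_sdiff.mp huC).1⟩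

end Trim

theorem stmt18_general (k b : ℕ) (hbk : b ≤ k)
    (F : CNF) (hF : IsKCNF k F) (hbl : WeaklyBLinear b F)
    (hcond :
      ((((F.biUnion id).filter
          (fun u => focc (k - b) + 1 ≤ occCount F u)).card - 1).choose b)
        ≤ focc (k - b)) :
    ∃ α, Satisfies α F := by
  change ((heavyLits F (focc (k - b))).card - 1).choose b ≤ focc (k - b) at hcond
  rcases hbk.eq_or_lt with rfl | hbk
  · rw [Nat.sub_self, focc_zero, Nat.le_zero, Nat.choose_eq_zero_iff] at hcond
    exact satisfiable_of_subset_of_card_le (L := heavyLits F 0) hF (by omega)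
      (fun C hC u hu => mem_heavyLits.mpr (occCount_pos hC hu)) (by omega)
  · obtain ⟨B, hB⟩ := hF.exists_trim hbk.le (heavyLits F (focc (k - b)))
    obtain ⟨α, hα⟩ := satisfiable_of_occCount_le_focc (Nat.sub_pos_of_lt hbk)
      (hF.trimCNF fun C hC => ⟨(hB C hC).1, (hB C hC).2.1⟩)
      (occCount_trimCNF_le_of_choose_le hbl hB hcond)
    exact ⟨α, hα.of_trimCNF⟩

/-- Let `F` be a weakly `b`-linear `k`-CNF formula and let `ℓ` be the number
of literals occurring in at least `focc(k-b)+1` clauses. If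
`C(ℓ-1, b) ≤ focc(k-b)`, then `F` is satisfiable. -/
theorem stmt18 (k b : ℕ) (hb : 1 ≤ b) (hbk : b ≤ k)
    (F : CNF) (hF : IsKCNF k F) (hbl : WeaklyBLinear b F)
    (hcond :
      ((((F.biUnion id).filter
          (fun u => focc (k - b) + 1 ≤ occCount F u)).card - 1).choose b)
        ≤ focc (k - b)) :
    ∃ α, Satisfies α F :=
  stmt18_general k b hbk F hF hbl hcond
end
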